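/- DI achieves its maximum on the full feature set: for every subset A of the row index set, DI(A) ≤ DI(full set), where DI(A) = trace((X_A C X_A^T + ρI)^{-1} X_A C Y^T Y C X_A^T). -/

import Mathlib

open Matrix

/-!
Since `C` is symmetric and idempotent, `DI(A) = tr((B_A B_Aᵀ + ρ)⁻¹ B_A W B_Aᵀ)` with `B = X C`
and `W = YᵀY`. The push-through identity `Bᵀ (B Bᵀ + ρ)⁻¹ B = 1 - ρ (BᵀB + ρ)⁻¹` rewrites this as
`tr W - ρ tr((B_AᵀB_A + ρ)⁻¹ W)`, an expression on the `N × N` sample side shared by all subsets.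
There `BᵀB = B_AᵀB_A + B_AᶜᵀB_Aᶜ ⪰ B_AᵀB_A`, inversion reverses the Loewner order, and
`M ↦ tr(M W)` is monotone because `W ⪰ 0`.
-/

namespace Matrix

section Inverse

variable {K n : Type*} [Field K] [PartialOrder K] [StarRing K] [StarOrderedRing K]
  [Fintype n] [DecidableEq n]

lemma PosDef.posSemidef_inv_sub_inv_add {P S : Matrix n n K} (hP : P.PosDef)
    (hS : S.PosSemidef) : (P⁻¹ - (P + S)⁻¹).PosSemidef := by
  set Q := P + S
  have hQ : Q.PosDef := hP.add_posSemidef hS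
  have hPQ : IsUnit P ↔ IsUnit Q := iff_of_true hP.isUnit hQ.isUnit
  have h₁ : P⁻¹ - Q⁻¹ = P⁻¹ * S * Q⁻¹ := by
    rw [inv_sub_inv hPQ, add_sub_cancel_left]
  have h₂ : P⁻¹ - Q⁻¹ = Q⁻¹ * S * P⁻¹ := by
    rw [← neg_sub, inv_sub_inv hPQ.symm, sub_add_cancel_left]
    noncomm_ring
  -- substituting `h₁` into `h₂` exhibits the difference as a sum of congruences of `S` and `P⁻¹`
  have hsum : P⁻¹ - Q⁻¹ = Q⁻¹ᴴ * S * Q⁻¹ + (S * Q⁻¹)ᴴ * P⁻¹ * (S * Q⁻¹) := by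
    rw [conjTranspose_mul, hQ.isHermitian.inv.eq, hS.isHermitian.eq]
    calc P⁻¹ - Q⁻¹ = Q⁻¹ * S * (Q⁻¹ + (P⁻¹ - Q⁻¹)) := by rw [add_sub_cancel, h₂]
      _ = _ := by rw [h₁]; noncomm_ring
  rw [hsum]
  exact (hS.conjTranspose_mul_mul_same _).add (hP.inv.posSemidef.conjTranspose_mul_mul_same _)

end Inverse

section Trace

variable {𝕜 n : Type*} [RCLike 𝕜] [Fintype n] [DecidableEq n]

open scoped ComplexOrder

open scoped MatrixOrder in
lemma PosSemidef.trace_mul_nonneg {A B : Matrix n n 𝕜} (hA : A.PosSemidef) (hB : B.PosSemidef) :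
    0 ≤ (A * B).trace := by
  have hB' := hB.conjTranspose_mul_mul_same (CFC.sqrt A)
  rw [(CFC.sqrt_nonneg A).posSemidef.isHermitian.eq] at hB'
  rw [← CFC.sqrt_mul_sqrt_self A hA.nonneg, mul_assoc, trace_mul_comm, mul_assoc, ← mul_assoc]
  exact hB'.trace_nonneg

lemma PosDef.trace_inv_add_mul_le {P S W : Matrix n n 𝕜} (hP : P.PosDef) (hS : S.PosSemidef)
    (hW : W.PosSemidef) : ((P + S)⁻¹ * W).trace ≤ (P⁻¹ * W).trace := by
  have h := (hP.posSemidef_inv_sub_inv_add hS).trace_mul_nonneg hW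
  rwa [sub_mul, trace_sub, sub_nonneg] at h

end Trace

lemma posSemidef_transpose_mul_self {k n : Type*} [Fintype k] [Fintype n] (B : Matrix k n ℝ) :
    (Bᵀ * B).PosSemidef := by
  simpa [conjTranspose_eq_transpose_of_trivial] using posSemidef_conjTranspose_mul_self B

lemma posDef_transpose_mul_self_add_smul_one {k n : Type*} [Fintype k] [Fintype n] [DecidableEq n]
    (B : Matrix k n ℝ) {ρ : ℝ} (hρ : 0 < ρ) : (Bᵀ * B + ρ • 1).PosDef := by
  rw [add_comm]
  exact (PosDef.one.smul hρ).add_posSemidef (posSemidef_transpose_mul_self B)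

lemma transpose_mul_self_eq_add_submatrix {ι n R : Type*} [Fintype ι] [DecidableEq ι]
    [NonUnitalNonAssocSemiring R] (B : Matrix ι n R) (A : Finset ι) :
    Bᵀ * B = (B.submatrix (fun i : A => i.1) id)ᵀ * B.submatrix (fun i : A => i.1) id +
      (B.submatrix (fun i : ↥Aᶜ => i.1) id)ᵀ * B.submatrix (fun i : ↥Aᶜ => i.1) id := by
  ext j l
  simp only [add_apply, mul_apply, transpose_apply, submatrix_apply, id]
  rw [Finset.sum_coe_sort A fun i => B i j * B i l, Finset.sum_coe_sort Aᶜ fun i => B i j * B i l,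
    Finset.sum_add_sum_compl]

noncomputable def ridgeTrace {k n : Type*} [Fintype k] [DecidableEq k] [Fintype n]
    (B : Matrix k n ℝ) (W : Matrix n n ℝ) (ρ : ℝ) : ℝ :=
  ((B * Bᵀ + ρ • 1)⁻¹ * (B * W * Bᵀ)).trace

section Ridge

variable {k n : Type*} [Fintype k] [DecidableEq k] [Fintype n] [DecidableEq n]

lemma transpose_mul_inv_mul_self_add_smul_one (B : Matrix k n ℝ) {ρ : ℝ} (hρ : 0 < ρ) :
    Bᵀ * (B * Bᵀ + ρ • 1)⁻¹ * B = 1 - ρ • (Bᵀ * B + ρ • 1)⁻¹ := by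
  have hP : IsUnit (B * Bᵀ + ρ • 1).det := by
    simpa using (posDef_transpose_mul_self_add_smul_one Bᵀ hρ).det_pos.ne'.isUnit
  have hQ : IsUnit (Bᵀ * B + ρ • 1).det :=
    (posDef_transpose_mul_self_add_smul_one B hρ).det_pos.ne'.isUnit
  have hcomm : (Bᵀ * B + ρ • 1) * Bᵀ = Bᵀ * (B * Bᵀ + ρ • 1) := by
    simp only [Matrix.add_mul, Matrix.mul_add, Matrix.smul_mul, Matrix.mul_smul, Matrix.mul_assoc,
      Matrix.one_mul, Matrix.mul_one]
  have hpush : Bᵀ * (B * Bᵀ + ρ • 1)⁻¹ = (Bᵀ * B + ρ • 1)⁻¹ * Bᵀ := by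
    calc Bᵀ * (B * Bᵀ + ρ • 1)⁻¹
        = (Bᵀ * B + ρ • 1)⁻¹ * ((Bᵀ * B + ρ • 1) * Bᵀ) * (B * Bᵀ + ρ • 1)⁻¹ := by
          rw [← Matrix.mul_assoc, nonsing_inv_mul _ hQ, Matrix.one_mul]
      _ = (Bᵀ * B + ρ • 1)⁻¹ * Bᵀ := by
          rw [hcomm, ← Matrix.mul_assoc, Matrix.mul_assoc _ _ (B * Bᵀ + ρ • 1)⁻¹,
            mul_nonsing_inv _ hP, Matrix.mul_one]
  set Q := Bᵀ * B + ρ • 1 with hQdef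
  have hgram : Bᵀ * B = Q - ρ • 1 := by rw [hQdef, add_sub_cancel_right]
  rw [hpush, Matrix.mul_assoc, hgram, Matrix.mul_sub, nonsing_inv_mul _ hQ, Matrix.mul_smul,
    Matrix.mul_one]

lemma trace_inv_mul_self_add_smul_one_mul (B : Matrix k n ℝ) (W : Matrix n n ℝ) {ρ : ℝ}
    (hρ : 0 < ρ) :
    ((B * Bᵀ + ρ • 1)⁻¹ * (B * W * Bᵀ)).trace = W.trace - ρ * ((Bᵀ * B + ρ • 1)⁻¹ * W).trace := by
  rw [← Matrix.mul_assoc, trace_mul_comm, ← Matrix.mul_assoc, ← Matrix.mul_assoc,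
    transpose_mul_inv_mul_self_add_smul_one B hρ, Matrix.sub_mul, Matrix.one_mul, trace_sub,
    Matrix.smul_mul, trace_smul, smul_eq_mul]

lemma ridgeTrace_submatrix_le {ι : Type*} [Fintype ι] [DecidableEq ι] (B : Matrix ι n ℝ)
    (A : Finset ι) {W : Matrix n n ℝ} (hW : W.PosSemidef) {ρ : ℝ} (hρ : 0 < ρ) :
    ridgeTrace (B.submatrix (fun i : A => i.1) id) W ρ ≤ ridgeTrace B W ρ := by
  set BA := B.submatrix (fun i : A => i.1) id
  set BAc := B.submatrix (fun i : ↥Aᶜ => i.1) id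
  have hgram : Bᵀ * B + ρ • 1 = (BAᵀ * BA + ρ • 1) + BAcᵀ * BAc := by
    rw [transpose_mul_self_eq_add_submatrix B A, add_right_comm]
  have hmono := (posDef_transpose_mul_self_add_smul_one BA hρ).trace_inv_add_mul_le
    (posSemidef_transpose_mul_self BAc) hW
  rw [← hgram] at hmono
  simp only [ridgeTrace, trace_inv_mul_self_add_smul_one_mul _ _ hρ]
  gcongr

end Ridge

section Centering

lemma mul_mul_transpose_eq_of_isIdempotentElem {m n R : Type*} [Fintype n] [CommSemiring R]
    {C : Matrix n n R} (hCt : Cᵀ = C) (hC : IsIdempotentElem C) (U : Matrix m n R) :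
    U * C * Uᵀ = U * C * (U * C)ᵀ := by
  conv_lhs => rw [← hC.eq]
  simp only [transpose_mul, hCt, Matrix.mul_assoc]

lemma mul_mul_transpose_mul_mul_mul_transpose_eq {m n l R : Type*} [Fintype n] [Fintype l]
    [CommSemiring R] {C : Matrix n n R} (hCt : Cᵀ = C) (U : Matrix m n R) (V : Matrix l n R) :
    U * C * Vᵀ * V * C * Uᵀ = U * C * (Vᵀ * V) * (U * C)ᵀ := by
  simp only [transpose_mul, hCt, Matrix.mul_assoc]

variable {n : Type*} [Fintype n] [DecidableEq n]

noncomputable def centeringMatrix (n : Type*) [Fintype n] [DecidableEq n] : Matrix n n ℝ :=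
  1 - (Fintype.card n : ℝ)⁻¹ • vecMulVec (fun _ => 1) (fun _ => 1)

lemma transpose_centeringMatrix : (centeringMatrix n)ᵀ = centeringMatrix n := by
  simp [centeringMatrix, transpose_vecMulVec]

lemma isIdempotentElem_centeringMatrix : IsIdempotentElem (centeringMatrix n) := by
  rcases isEmpty_or_nonempty n with hn | hn
  · exact Subsingleton.elim _ _
  have hcard : (Fintype.card n : ℝ) ≠ 0 := Nat.cast_ne_zero.2 Fintype.card_ne_zero
  unfold IsIdempotentElem centeringMatrix
  set J : Matrix n n ℝ := vecMulVec (fun _ => 1) (fun _ => 1)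
  have hJ : J * J = (Fintype.card n : ℝ) • J := by
    simp [J, vecMulVec_mul_vecMulVec, dotProduct]
  simp only [sub_mul, mul_sub, one_mul, mul_one, smul_mul_smul_comm, hJ, smul_smul]
  rw [mul_assoc, inv_mul_cancel₀ hcard, mul_one]
  abel

end Centering

end Matrix

/-- DI achieves its maximum on the full feature set: for every subset `A` of the
rows, `DI(A) ≤ DI(full)`. -/
theorem DI_max_at_full (d N c : ℕ)
    (X : Matrix (Fin d) (Fin N) ℝ) (Y : Matrix (Fin c) (Fin N) ℝ)
    (C : Matrix (Fin N) (Fin N) ℝ)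
    (hC : C = (1 : Matrix (Fin N) (Fin N) ℝ) -
      (N : ℝ)⁻¹ • vecMulVec (fun _ => (1 : ℝ)) (fun _ => (1 : ℝ)))
    (ρ : ℝ) (hρ : 0 < ρ)
    (A : Finset (Fin d))
    (XA : Matrix {i // i ∈ A} (Fin N) ℝ)
    (hXA : XA = X.submatrix (fun i : {i // i ∈ A} => i.1) id) :
    ((XA * C * XAᵀ + ρ • (1 : Matrix {i // i ∈ A} {i // i ∈ A} ℝ))⁻¹ *
        (XA * C * Yᵀ * Y * C * XAᵀ)).trace ≤
      ((X * C * Xᵀ + ρ • (1 : Matrix (Fin d) (Fin d) ℝ))⁻¹ *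
        (X * C * Yᵀ * Y * C * Xᵀ)).trace := by
  replace hC : C = centeringMatrix (Fin N) := by simpa [centeringMatrix] using hC
  have hCt : Cᵀ = C := hC ▸ transpose_centeringMatrix
  have hCi : IsIdempotentElem C := hC ▸ isIdempotentElem_centeringMatrix
  rw [hXA, mul_mul_transpose_eq_of_isIdempotentElem hCt hCi,
    mul_mul_transpose_eq_of_isIdempotentElem hCt hCi,
    mul_mul_transpose_mul_mul_mul_transpose_eq hCt, mul_mul_transpose_mul_mul_mul_transpose_eq hCt]
  exact ridgeTrace_submatrix_le (X * C) A (posSemidef_transpose_mul_self Y) hρ
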